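/- For every matrix A ∈ 𝕋±^{d×n}, the set {(x,z) ∈ 𝕋±^{n+d} : A⊙x ⋈ z componentwise and x ≥ 𝟘 componentwise} is tropically convex. -/

import Mathlib

/-!  Signed tropical numbers 𝕋±, the symmetrized tropical semiring 𝕊,
     and signed tropical convexity (Loho–Végh). -/

inductive SSign : Type where
  | pos : SSign
  | neg : SSign
  | bal : SSign
deriving DecidableEq

/-- The symmetrized tropical semiring 𝕊: the tropical zero 𝟘 = -∞ together with
elements `elem s r` where `s` is a sign (⊕, ⊖ or •) and `r` a real number. -/
inductive STrop : Type where
  | zero : STrop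
  | elem : SSign → ℝ → STrop

namespace STrop

/-- membership in the signed tropical numbers 𝕋± (i.e. not balanced-nonzero). -/
def isSigned : STrop → Prop
  | elem SSign.bal _ => False
  | _ => True

/-- membership in 𝕋≥, the nonnegative tropical numbers. -/
def nneg : STrop → Prop
  | zero => True
  | elem SSign.pos _ => True
  | _ => False

/-- membership in 𝕋≤, the nonpositive tropical numbers. -/
def npos : STrop → Prop
  | zero => True
  | elem SSign.neg _ => True
  | _ => False

/-- strictly positive signed element (sign ⊕, not 𝟘). -/
def isPos : STrop → Prop
  | elem SSign.pos _ => True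
  | _ => False

/-- balanced or 𝟘 (membership in 𝕋•). -/
def balZero : STrop → Prop
  | zero => True
  | elem SSign.bal _ => True
  | _ => False

/-- the negation map ⊖. -/
def neg : STrop → STrop
  | zero => zero
  | elem SSign.pos r => elem SSign.neg r
  | elem SSign.neg r => elem SSign.pos r
  | elem SSign.bal r => elem SSign.bal r

/-- tropical addition ⊕ on 𝕊. -/
noncomputable def add : STrop → STrop → STrop
  | zero, y => y
  | x, zero => x
  | elem s r, elem t u =>
    if r < u then elem t u
    else if u < r then elem s r
    else if s = t then elem s r
    else elem SSign.bal r

def signMul : SSign → SSign → SSign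
  | SSign.pos, t => t
  | SSign.neg, SSign.pos => SSign.neg
  | SSign.neg, SSign.neg => SSign.pos
  | SSign.neg, SSign.bal => SSign.bal
  | SSign.bal, _ => SSign.bal

/-- tropical multiplication ⊙ on 𝕊. -/
def mul : STrop → STrop → STrop
  | zero, _ => zero
  | _, zero => zero
  | elem s r, elem t u => elem (signMul s t) (r + u)

/-- a ⊖ b := a ⊕ (⊖b). -/
noncomputable def sub (x y : STrop) : STrop := add x (neg y)

/-- the tropical one, the signed element ⊕0. -/
def one : STrop := elem SSign.pos 0

/-- the absolute value |·| : 𝕊 → 𝕋≥. -/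
def absS : STrop → STrop
  | zero => zero
  | elem _ r => elem SSign.pos r

/-- strict order: x > y iff x ⊖ y is a strictly positive signed element. -/
def sgt (x y : STrop) : Prop := isPos (sub x y)

/-- balance relation: x ⋈ y iff x ⊖ y is balanced or 𝟘. -/
def bal (x y : STrop) : Prop := balZero (sub x y)

/-- the relation ⊵ : x ⊵ y iff x > y or x ⋈ y. -/
def teq (x y : STrop) : Prop := sgt x y ∨ bal x y

/-- the total order ≤ on the signed tropical numbers 𝕋±
(arbitrarily `False` whenever a balanced element is involved). -/
def sle : STrop → STrop → Prop
  | zero, zero => True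
  | zero, elem SSign.pos _ => True
  | elem SSign.neg _, zero => True
  | elem SSign.neg _, elem SSign.pos _ => True
  | elem SSign.pos r, elem SSign.pos u => r ≤ u
  | elem SSign.neg r, elem SSign.neg u => u ≤ r
  | _, _ => False

/-- U(a): the set of signed numbers incomparable with a; the singleton {a}
for signed a, and the order interval [⊖|a|, |a|] for balanced a. -/
def U : STrop → Set STrop
  | elem SSign.bal r => {x | isSigned x ∧ sle (elem SSign.neg r) x ∧ sle x (elem SSign.pos r)}
  | a => {a}

/-- tropical sum of finitely many elements of 𝕊. -/
noncomputable def sumFin : ∀ {n : ℕ}, (Fin n → STrop) → STrop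
  | 0, _ => zero
  | _ + 1, f => add (f 0) (sumFin fun i => f i.succ)

/-- matrix–vector product A ⊙ x over 𝕊. -/
noncomputable def mv {d n : ℕ} (A : Fin d → Fin n → STrop) (x : Fin n → STrop) : Fin d → STrop :=
  fun i => sumFin fun j => mul (A i j) (x j)

/-- vectors in 𝕋±^d. -/
def isSignedVec {d : ℕ} (v : Fin d → STrop) : Prop := ∀ i, isSigned (v i)

/-- the signed tropical convex hull of the columns of a matrix A:
tconv(A) = {z ∈ 𝕋±^d : z ⋈ A⊙x for some x ∈ 𝕋≥^n with ⊕_j x_j = 0}. -/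
def tconv {d n : ℕ} (A : Fin d → Fin n → STrop) : Set (Fin d → STrop) :=
  {z | isSignedVec z ∧ ∃ x : Fin n → STrop,
    (∀ j, nneg (x j)) ∧ sumFin x = one ∧ ∀ i, bal (z i) (mv A x i)}

/-- the signed tropical convex hull of an arbitrary set: the union of the hulls
of all finite collections of points of M. -/
def tconvSet {d : ℕ} (M : Set (Fin d → STrop)) : Set (Fin d → STrop) :=
  ⋃ (n : ℕ) (A : Fin d → Fin n → STrop) (_ : ∀ j, (fun i => A i j) ∈ M), tconv A

/-- a set M ⊆ 𝕋±^d is tropically convex iff M = tconv(M). -/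
def TropConvex {d : ℕ} (M : Set (Fin d → STrop)) : Prop := M = tconvSet M

/-- evaluation a ⊙ (0, x₁, …, x_d)ᵀ of an affine functional. -/
noncomputable def affEval {d : ℕ} (a : Fin (d + 1) → STrop) (x : Fin d → STrop) : STrop :=
  sumFin fun j => mul (a j) ((Fin.cons one x : Fin (d + 1) → STrop) j)

/-- the open signed tropical halfspace H⁺(a) = {x ∈ 𝕋±^d : a⊙(0,x)ᵀ > 𝟘}. -/
def Hopen {d : ℕ} (a : Fin (d + 1) → STrop) : Set (Fin d → STrop) :=
  {x | isSignedVec x ∧ sgt (affEval a x) zero}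

/-- the closed signed tropical halfspace H̄⁺(a) = {x ∈ 𝕋±^d : a⊙(0,x)ᵀ ⊵ 𝟘}. -/
def Hclosed {d : ℕ} (a : Fin (d + 1) → STrop) : Set (Fin d → STrop) :=
  {x | isSignedVec x ∧ teq (affEval a x) zero}

/-- the non-negative kernel nnker(A). -/
def nnker {d n : ℕ} (A : Fin d → Fin n → STrop) : Set (Fin n → STrop) :=
  {x | (∀ j, nneg (x j)) ∧ x ≠ (fun _ => zero) ∧ ∀ i, balZero (mv A x i)}

/-- the open tropical cone sep(A) = {y ∈ 𝕋±^d : yᵀ⊙A > 𝟘 componentwise}. -/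
def sep {d : ℕ} {J : Type} (A : Fin d → J → STrop) : Set (Fin d → STrop) :=
  {y | isSignedVec y ∧ ∀ j, isPos (sumFin fun i => mul (y i) (A i j))}

end STrop

/-! 𝕊 is a commutative semiring in which the balanced elements form an ideal, so the
surpass relation `b ⊨ a` (`b = a ⊕ c` with `c` balanced) is transitive and compatible with
matrix–vector products. For signed `a`, `b ⋈ a` amounts to `b ⊨ a`; in particular two signed
numbers in balance are equal. Now let `w ⋈ B ⊙ λ`, where the columns `(x_k, z_k)` of
`B = (X; Z)` lie in the set. The `x`-part of `w` is signed and `X ⊙ λ ≥ 𝟘`, so `w_x = X ⊙ λ`,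
and `A ⊙ w_x = (A ⊙ X) ⊙ λ ⊨ Z ⊙ λ ⊨ w_z`, hence `A ⊙ w_x ⋈ w_z`. -/
namespace STrop

open Matrix

theorem elem_add_elem (s t : SSign) (r u : ℝ) :
    add (elem s r) (elem t u) = if r < u then elem t u else if u < r then elem s r
      else if s = t then elem s r else elem SSign.bal r := rfl

protected theorem add_zero (x : STrop) : add x zero = x := by cases x <;> rfl

protected theorem add_comm (x y : STrop) : add x y = add y x := by
  rcases x with _ | ⟨s, r⟩ <;> rcases y with _ | ⟨t, u⟩ <;> try rfl
  rw [elem_add_elem, elem_add_elem]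
  split_ifs <;> simp_all <;> linarith

protected theorem add_assoc (a b c : STrop) : add (add a b) c = add a (add b c) := by
  rcases a with _ | ⟨s, r⟩ <;> rcases b with _ | ⟨t, u⟩ <;> rcases c with _ | ⟨p, v⟩ <;>
    (try simp only [STrop.add_zero]) <;> try rfl
  simp only [elem_add_elem]
  split_ifs <;> simp only [elem_add_elem] <;> split_ifs <;> simp_all <;> linarith

theorem signMul_comm (s t : SSign) : signMul s t = signMul t s := by
  cases s <;> cases t <;> rfl

theorem signMul_assoc (s t p : SSign) :
    signMul (signMul s t) p = signMul s (signMul t p) := by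
  cases s <;> cases t <;> cases p <;> rfl

protected theorem mul_comm (x y : STrop) : mul x y = mul y x := by
  cases x <;> cases y <;> simp [mul, signMul_comm, add_comm]

protected theorem mul_assoc (a b c : STrop) : mul (mul a b) c = mul a (mul b c) := by
  cases a <;> cases b <;> cases c <;> simp [mul, signMul_assoc, add_assoc]

protected theorem mul_one (x : STrop) : mul x one = x := by
  rcases x with _ | ⟨s, r⟩
  · rfl
  · cases s <;> simp [mul, one, signMul]

protected theorem mul_add (a b c : STrop) : mul a (add b c) = add (mul a b) (mul a c) := by
  rcases a with _ | ⟨q, w⟩ <;> rcases b with _ | ⟨s, r⟩ <;> rcases c with _ | ⟨t, u⟩ <;>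
    (try simp only [STrop.add_zero]) <;> try rfl
  rw [elem_add_elem]
  cases q <;> cases s <;> cases t <;>
    (split_ifs <;> simp only [mul, signMul, elem_add_elem] <;> split_ifs <;> simp_all <;> linarith)

instance : Zero STrop := ⟨zero⟩
instance : One STrop := ⟨one⟩
noncomputable instance : Add STrop := ⟨add⟩
instance : Mul STrop := ⟨mul⟩

theorem add_def (a b : STrop) : add a b = a + b := rfl

noncomputable instance : CommSemiring STrop where
  nsmul := nsmulRec
  zero_add _ := rfl
  add_zero := STrop.add_zero
  add_comm := STrop.add_comm
  add_assoc := STrop.add_assoc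
  zero_mul _ := rfl
  mul_zero x := by cases x <;> rfl
  one_mul x := (STrop.mul_comm _ _).trans (STrop.mul_one x)
  mul_one := STrop.mul_one
  mul_comm := STrop.mul_comm
  mul_assoc := STrop.mul_assoc
  left_distrib := STrop.mul_add
  right_distrib a b c := by
    change mul (add a b) c = add (mul a c) (mul b c)
    rw [STrop.mul_comm, STrop.mul_add, STrop.mul_comm c, STrop.mul_comm c]

theorem sumFin_eq_sum {n : ℕ} (f : Fin n → STrop) : sumFin f = ∑ i, f i := by
  induction n with
  | zero => rfl
  | succ n ih => rw [Fin.sum_univ_succ, ← ih]; rfl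

theorem mv_apply {d n : ℕ} (A : Fin d → Fin n → STrop) (x : Fin n → STrop) (i : Fin d) :
    mv A x i = ∑ j, A i j * x j :=
  sumFin_eq_sum _

theorem mv_eq_mulVec {d n : ℕ} (A : Fin d → Fin n → STrop) (x : Fin n → STrop) :
    mv A x = of A *ᵥ x :=
  funext (mv_apply A x)

theorem nneg_add {a b : STrop} (ha : nneg a) (hb : nneg b) : nneg (a + b) := by
  rcases a with _ | ⟨_ | _ | _, r⟩ <;> rcases b with _ | ⟨_ | _ | _, u⟩ <;>
    try trivial
  change nneg (add _ _)
  rw [elem_add_elem]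
  split_ifs <;> trivial

theorem nneg_mul {a b : STrop} (ha : nneg a) (hb : nneg b) : nneg (a * b) := by
  rcases a with _ | ⟨_ | _ | _, r⟩ <;> rcases b with _ | ⟨_ | _ | _, u⟩ <;>
    trivial

def nnegSubsemiring : Subsemiring STrop where
  carrier := {x | nneg x}
  zero_mem' := trivial
  one_mem' := trivial
  add_mem' := nneg_add
  mul_mem' := nneg_mul

theorem nneg_mulVec {ι κ : Type*} [Fintype κ] {X : Matrix ι κ STrop}
    (hX : ∀ j k, nneg (X j k)) {l : κ → STrop} (hl : ∀ k, nneg (l k)) (j : ι) :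
    nneg ((X *ᵥ l) j) :=
  Subsemiring.sum_mem nnegSubsemiring fun k _ => nneg_mul (hX j k) (hl k)

theorem isSigned_of_nneg {a : STrop} (h : nneg a) : isSigned a := by
  rcases a with _ | ⟨_ | _ | _, r⟩ <;> trivial

theorem balZero_add {a b : STrop} (ha : balZero a) (hb : balZero b) : balZero (a + b) := by
  rcases a with _ | ⟨_ | _ | _, r⟩ <;> rcases b with _ | ⟨_ | _ | _, u⟩ <;>
    try trivial
  change balZero (add _ _)
  rw [elem_add_elem]
  split_ifs <;> trivial

theorem balZero_mul_left (a : STrop) {b : STrop} (hb : balZero b) : balZero (a * b) := by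
  rcases a with _ | ⟨_ | _ | _, r⟩ <;> rcases b with _ | ⟨_ | _ | _, u⟩ <;>
    trivial

def balIdeal : Ideal STrop where
  carrier := {x | balZero x}
  zero_mem' := trivial
  add_mem' := balZero_add
  smul_mem' := balZero_mul_left

theorem neg_add (a b : STrop) : neg (a + b) = neg a + neg b := by
  rcases a with _ | ⟨s, r⟩ <;> rcases b with _ | ⟨t, u⟩ <;> try rfl
  · cases s <;> rfl
  change neg (add _ _) = add _ _
  cases s <;> cases t <;> simp only [neg, elem_add_elem] <;> split_ifs <;> simp_all

theorem neg_neg (a : STrop) : neg (neg a) = a := by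
  rcases a with _ | ⟨_ | _ | _, r⟩ <;> rfl

theorem balZero_neg {a : STrop} (h : balZero a) : balZero (neg a) := by
  rcases a with _ | ⟨_ | _ | _, r⟩ <;> trivial

theorem balZero_add_neg_self (a : STrop) : balZero (a + neg a) := by
  rcases a with _ | ⟨s, r⟩
  · trivial
  · cases s <;> simp [neg, ← add_def, elem_add_elem, balZero]

theorem bal_self (a : STrop) : bal a a := balZero_add_neg_self a

theorem bal_comm {a b : STrop} (h : bal a b) : bal b a := by
  have h' := balZero_neg h
  rwa [sub, add_def, neg_add, neg_neg, add_comm] at h'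

theorem eq_or_balZero_of_bal {y z : STrop} (hz : isSigned z) (h : bal y z) :
    y = z ∨ (balZero y ∧ z + y = y) := by
  rcases z with _ | ⟨s, r⟩
  · exact Or.inr ⟨by rwa [bal, sub, neg, STrop.add_zero] at h, rfl⟩
  rcases y with _ | ⟨t, u⟩
  · cases s <;> first | exact h.elim | exact hz.elim
  cases s <;> cases t <;> (try exact hz.elim) <;>
    simp only [bal, sub, neg, elem_add_elem] at h <;> simp only [← add_def, elem_add_elem] <;>
    split_ifs at h ⊢ <;> simp_all [balZero] <;> linarith

theorem eq_of_bal {y z : STrop} (hy : isSigned y) (hz : isSigned z) (h : bal y z) : y = z := by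
  rcases eq_or_balZero_of_bal hz h with rfl | ⟨hby, hzy⟩
  · rfl
  · obtain rfl : y = 0 := by
      rcases y with _ | ⟨_ | _ | _, u⟩ <;> first | rfl | exact hby.elim | exact hy.elim
    rwa [add_zero, eq_comm] at hzy

def Surpasses (b a : STrop) : Prop := ∃ c ∈ balIdeal, b = a + c

theorem Surpasses.trans {a b c : STrop} (hab : Surpasses a b) (hbc : Surpasses b c) :
    Surpasses a c := by
  obtain ⟨e, he, rfl⟩ := hab
  obtain ⟨f, hf, rfl⟩ := hbc
  exact ⟨f + e, add_mem hf he, add_assoc _ _ _⟩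

theorem Surpasses.bal {a b : STrop} (h : Surpasses b a) : bal b a := by
  obtain ⟨c, hc, rfl⟩ := h
  rw [STrop.bal, sub, add_def, add_right_comm]
  exact balZero_add (bal_self a) hc

theorem surpasses_of_bal {y z : STrop} (hz : isSigned z) (h : bal y z) : Surpasses y z := by
  rcases eq_or_balZero_of_bal hz h with rfl | ⟨hy, hzy⟩
  · exact ⟨0, zero_mem _, (add_zero y).symm⟩
  · exact ⟨y, hy, hzy.symm⟩

theorem surpasses_mulVec {ι κ : Type*} [Fintype κ] {C D : Matrix ι κ STrop}
    (h : ∀ i k, Surpasses (C i k) (D i k)) (l : κ → STrop) (i : ι) :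
    Surpasses ((C *ᵥ l) i) ((D *ᵥ l) i) := by
  choose c hc hC using h
  have : C = D + of c := Matrix.ext hC
  refine ⟨(of c *ᵥ l) i, Ideal.sum_mem _ fun k _ => Ideal.mul_mem_right _ _ (hc i k), ?_⟩
  rw [this, add_mulVec, Pi.add_apply]

theorem bal_mulVec_mulVec {ι κ μ : Type*} [Fintype κ] [Fintype μ] {A : Matrix ι κ STrop}
    {X : Matrix κ μ STrop} {Z : Matrix ι μ STrop} (hZ : ∀ i k, isSigned (Z i k))
    (hAXZ : ∀ i k, bal ((A * X) i k) (Z i k)) (l : μ → STrop) (i : ι) {z : STrop}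
    (hz : isSigned z) (hzZ : bal z ((Z *ᵥ l) i)) : bal ((A *ᵥ (X *ᵥ l)) i) z := by
  rw [mulVec_mulVec]
  have hAXl : Surpasses (((A * X) *ᵥ l) i) ((Z *ᵥ l) i) :=
    surpasses_mulVec (fun i k => surpasses_of_bal (hZ i k) (hAXZ i k)) l i
  exact (hAXl.trans (surpasses_of_bal hz (bal_comm hzZ))).bal

theorem mem_tconv_single {d : ℕ} {v : Fin d → STrop} (hv : isSignedVec v) :
    v ∈ tconv (fun i (_ : Fin 1) => v i) := by
  refine ⟨hv, fun _ => 1, fun _ => trivial, ?_, fun i => ?_⟩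
  · rw [sumFin_eq_sum, Fin.sum_univ_one]; rfl
  · rw [mv_apply, Fin.sum_univ_one, mul_one]
    exact bal_self _

theorem subset_tconvSet {d : ℕ} {M : Set (Fin d → STrop)} (hM : ∀ v ∈ M, isSignedVec v) :
    M ⊆ tconvSet M := fun v hv =>
  Set.mem_iUnion₂_of_mem (i := 1) (j := fun i _ => v i) (Set.mem_iUnion_of_mem (fun _ => hv)
    (mem_tconv_single (hM v hv)))

theorem tropConvex_of_tconvSet_subset {d : ℕ} {M : Set (Fin d → STrop)}
    (hM : ∀ v ∈ M, isSignedVec v) (h : tconvSet M ⊆ M) : TropConvex M :=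
  (subset_tconvSet hM).antisymm h

end STrop

open STrop Matrix in
theorem convexity_cone_preimage_general (d n : ℕ) (A : Fin d → Fin n → STrop) :
    STrop.TropConvex {w : Fin (n + d) → STrop |
      (∀ j : Fin n, STrop.nneg (w (Fin.castAdd d j))) ∧
      (∀ i : Fin d, STrop.isSigned (w (Fin.natAdd n i))) ∧
      (∀ i : Fin d,
        STrop.bal (STrop.mv A (fun j => w (Fin.castAdd d j)) i)
          (w (Fin.natAdd n i)))} := by
  refine tropConvex_of_tconvSet_subset
    (fun w hw => Fin.addCases (fun j => isSigned_of_nneg (hw.1 j)) hw.2.1) ?_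
  simp only [tconvSet, Set.iUnion_subset_iff]
  rintro m B hB w ⟨hw, l, hl, -, hwB⟩
  set X : Matrix (Fin n) (Fin m) STrop := of fun j k => B (Fin.castAdd d j) k
  set Z : Matrix (Fin d) (Fin m) STrop := of fun i k => B (Fin.natAdd n i) k
  have hBX : ∀ j, mv B l (Fin.castAdd d j) = (X *ᵥ l) j := fun j => mv_apply _ _ _
  have hBZ : ∀ i, mv B l (Fin.natAdd n i) = (Z *ᵥ l) i := fun i => mv_apply _ _ _
  have hAX : ∀ i k, mv A (fun j => B (Fin.castAdd d j) k) i = (of A * X) i k :=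
    fun i k => mv_apply _ _ _
  have hXl : ∀ j, nneg ((X *ᵥ l) j) := nneg_mulVec (fun j k => (hB k).1 j) hl
  have hwX : (fun j => w (Fin.castAdd d j)) = X *ᵥ l := funext fun j =>
    eq_of_bal (hw _) (isSigned_of_nneg (hXl j)) (hBX j ▸ hwB _)
  refine ⟨fun j => (congrFun hwX j).symm ▸ hXl j, fun i => hw _, fun i => ?_⟩
  rw [mv_eq_mulVec, hwX]
  exact bal_mulVec_mulVec (fun i k => (hB k).2.1 i) (fun i k => hAX i k ▸ (hB k).2.2 i) l i
    (hw _) (hBZ i ▸ hwB _)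

/-- the set {(x,z) ∈ 𝕋±^{n+d} : A⊙x ⋈ z, x ≥ 𝟘} is tropically
convex. -/
theorem convexity_cone_preimage (d n : ℕ) (A : Fin d → Fin n → STrop)
    (hA : ∀ i j, STrop.isSigned (A i j)) :
    STrop.TropConvex {w : Fin (n + d) → STrop |
      (∀ j : Fin n, STrop.nneg (w (Fin.castAdd d j))) ∧
      (∀ i : Fin d, STrop.isSigned (w (Fin.natAdd n i))) ∧
      (∀ i : Fin d,
        STrop.bal (STrop.mv A (fun j => w (Fin.castAdd d j)) i)
          (w (Fin.natAdd n i)))} :=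
  convexity_cone_preimage_general d n A
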